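/- arXiv:2312.10625 — 3 statements merged into one kernel-verified Lean document; each statement's English description precedes it below -/
import Mathlib

section
/- Let R be a commutative ring and q ∈ Rˣ a unit such that [n]_q := 1 − q^{−n} is a unit of R for every n ≥ 1, and let A be an associative unital R-algebra. If x, y ∈ A are nilpotent elements satisfying y·x = q • (x·y), then y·x is nilpotent and the pentagon identity holds: 𝓔_q(x) · 𝓔_q(y) = 𝓔_q(y) · 𝓔_q(−y·x) · 𝓔_q(x). -/
/-- The q-number `[n]_q = 1 - q^{-n}`, for a unit `q` of a commutative ring `R`. -/
noncomputable def qNumU {R : Type*} [CommRing R] (q : Rˣ) (n : ℕ) : R :=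
  1 - ((q⁻¹ : Rˣ) : R) ^ n

/-- The q-factorial `[n]_q! = [1]_q [2]_q ⋯ [n]_q`, with `[0]_q! = 1`. -/
noncomputable def qFactU {R : Type*} [CommRing R] (q : Rˣ) : ℕ → R
  | 0 => 1
  | n + 1 => qFactU q n * qNumU q (n + 1)

/-- The exponentiated q-dilogarithm `𝓔_q(z) = Σ_{n≥0} ([n]_q!)⁻¹ • z^n` of an algebra
element `z`; for nilpotent `z` this finitary sum (`finsum`) is the evident finite sum. -/
noncomputable def qE {R : Type*} [CommRing R] {A : Type*} [Ring A] [Algebra R A]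
    (q : Rˣ) (z : A) : A :=
  ∑ᶠ n : ℕ, Ring.inverse (qFactU q n) • z ^ n

namespace QPent
open Finset
variable {R : Type*} [CommRing R]

/-- Gaussian binomial coefficient, as a polynomial expression in `t`. -/
def gB (t : R) : ℕ → ℕ → R
  | _, 0 => 1
  | 0, _ + 1 => 0
  | n + 1, k + 1 => gB t n k + t ^ (k + 1) * gB t n (k + 1)

/-- `gD t b j = ∏_{m<j} (1 - t^(b-m))`. -/
noncomputable def gD (t : R) (b j : ℕ) : R := ∏ m ∈ range j, (1 - t ^ (b - m))

/-- abstract q-factorial `∏_{k=1}^n (1-t^k)`. -/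
noncomputable def gF (t : R) : ℕ → R
  | 0 => 1
  | n + 1 => gF t n * (1 - t ^ (n + 1))

@[simp] lemma gB_zero (t : R) (n : ℕ) : gB t n 0 = 1 := by cases n <;> rfl

lemma gB_succ_succ (t : R) (n k : ℕ) :
    gB t (n + 1) (k + 1) = gB t n k + t ^ (k + 1) * gB t n (k + 1) := rfl

lemma gB_eq_zero (t : R) : ∀ n k : ℕ, n < k → gB t n k = 0
  | _, 0, h => absurd h (Nat.not_lt_zero _)
  | 0, _ + 1, _ => rfl
  | n + 1, k + 1, h => by
    rw [gB_succ_succ, gB_eq_zero t n k (by omega), gB_eq_zero t n (k + 1) (by omega)]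
    ring

@[simp] lemma gB_self (t : R) : ∀ n : ℕ, gB t n n = 1
  | 0 => rfl
  | n + 1 => by
    rw [gB_succ_succ, gB_self t n, gB_eq_zero t n (n + 1) (Nat.lt_succ_self n)]
    ring

@[simp] lemma gD_zero (t : R) (b : ℕ) : gD t b 0 = 1 := by simp [gD]

lemma gD_succ (t : R) (b j : ℕ) : gD t b (j + 1) = gD t b j * (1 - t ^ (b - j)) := by
  simp [gD, prod_range_succ]

lemma gD_eq_zero (t : R) {b j : ℕ} (h : b < j) : gD t b j = 0 := by
  apply prod_eq_zero (mem_range.mpr h)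
  simp [Nat.sub_self]

@[simp] lemma gF_zero (t : R) : gF t 0 = 1 := rfl
lemma gF_succ (t : R) (n : ℕ) : gF t (n + 1) = gF t n * (1 - t ^ (n + 1)) := rfl

lemma gD_mul_gF (t : R) (b : ℕ) : ∀ j : ℕ, j ≤ b → gD t b j * gF t (b - j) = gF t b
  | 0, _ => by rw [gD_zero, Nat.sub_zero, one_mul]
  | j + 1, h => by
    have ih := gD_mul_gF t b j (by omega)
    have hb : gF t (b - j) = gF t (b - (j + 1)) * (1 - t ^ (b - j)) := by
      have e : b - j = (b - (j + 1)) + 1 := by omega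
      rw [e, gF_succ, ← e]
    rw [gD_succ]
    linear_combination ih - gD t b j * hb

lemma gB_mul_gF (t : R) : ∀ n j : ℕ, j ≤ n → gB t n j * gF t j * gF t (n - j) = gF t n
  | n, 0, _ => by simp
  | 0, j + 1, h => by omega
  | n + 1, k + 1, h => by
    rcases Nat.eq_or_lt_of_le h with he | hlt
    · obtain rfl : k = n := by omega
      rw [gB_self, Nat.sub_self, one_mul, gF_zero, mul_one]
    · have hkn : k + 1 ≤ n := by omega
      have ih1 := gB_mul_gF t n k (by omega)
      have ih2 := gB_mul_gF t n (k + 1) hkn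
      have e2 : n + 1 - (k + 1) = n - k := by omega
      have e1 : gF t (k + 1) = gF t k * (1 - t ^ (k + 1)) := rfl
      have e4 : gF t (n - k) = gF t (n - (k + 1)) * (1 - t ^ (n - k)) := by
        have e : n - k = (n - (k + 1)) + 1 := by omega
        rw [e, gF_succ, ← e]
      have hp : t ^ (k + 1) * t ^ (n - k) = t ^ (n + 1) := by
        rw [← pow_add]; congr 1; omega
      have hF : gF t (n + 1) = gF t n * (1 - t ^ (n + 1)) := rfl
      rw [e2, gB_succ_succ, hF]
      linear_combination (gB t n k * gF t (n - k)) * e1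
        + (t ^ (k + 1) * gB t n (k + 1) * gF t (k + 1)) * e4
        + (1 - t ^ (k + 1)) * ih1
        + (t ^ (k + 1) * (1 - t ^ (n - k))) * ih2
        - gF t n * hp

/-- the sign/weight `(-1)^j t^(j choose 2)`. -/
def gw (t : R) (j : ℕ) : R := (-1) ^ j * t ^ (j.choose 2)

@[simp] lemma gw_zero (t : R) : gw t 0 = 1 := by simp [gw]

lemma gw_succ (t : R) (j : ℕ) : gw t (j + 1) = -(gw t j * t ^ j) := by
  unfold gw
  rw [Nat.choose_succ_succ, Nat.choose_one_right, pow_add, pow_succ]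
  ring

/-- The key polynomial identity. -/
theorem gG (t : R) (b : ℕ) : ∀ a : ℕ,
    ∑ j ∈ range (a + 1), gw t j * gB t a j * gD t b j = t ^ (a * b)
  | 0 => by simp
  | a + 1 => by
    have ih := gG t b a
    rw [Finset.sum_range_succ']
    have key : ∀ i ∈ range (a + 1), gw t (i + 1) * gB t (a + 1) (i + 1) * gD t b (i + 1)
        = (t ^ b * (gw t i * gB t a i * gD t b i) - gw t i * t ^ i * gB t a i * gD t b i)
          + gw t (i + 1) * t ^ (i + 1) * gB t a (i + 1) * gD t b (i + 1) := by
      intro i _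
      rw [gB_succ_succ, gw_succ, gD_succ]
      rcases le_or_gt i b with h | h
      · have hp : t ^ i * t ^ (b - i) = t ^ b := by rw [← pow_add]; congr 1; omega
        linear_combination (gw t i * gB t a i * gD t b i) * hp
      · rw [gD_eq_zero t h]; ring
    rw [Finset.sum_congr rfl key, Finset.sum_add_distrib, Finset.sum_sub_distrib,
      ← Finset.mul_sum, ih]
    have hshift : ∑ i ∈ range (a + 1), gw t (i + 1) * t ^ (i + 1) * gB t a (i + 1) * gD t b (i + 1)
        = ∑ j ∈ range (a + 1), gw t j * t ^ j * gB t a j * gD t b j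
          + gw t (a + 1) * t ^ (a + 1) * gB t a (a + 1) * gD t b (a + 1)
          - gw t 0 * t ^ 0 * gB t a 0 * gD t b 0 := by
      rw [eq_sub_iff_add_eq, ← Finset.sum_range_succ'
        (fun j => gw t j * t ^ j * gB t a j * gD t b j) (a + 1), Finset.sum_range_succ]
    rw [hshift, gB_eq_zero t a (a + 1) (Nat.lt_succ_self a)]
    have hpow : t ^ b * t ^ (a * b) = t ^ ((a + 1) * b) := by
      rw [← pow_add]; congr 1; ring
    simp only [gw_zero, pow_zero, gB_zero, gD_zero, mul_zero, zero_mul, mul_one, one_mul]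
    linear_combination hpow

/-- inverse q-factorial coefficient -/
noncomputable def qc (q : Rˣ) (n : ℕ) : R := Ring.inverse (qFactU q n)

section Units
variable (q : Rˣ)

lemma qFact_eq_gF : ∀ n : ℕ, qFactU q n = gF ((q⁻¹ : Rˣ) : R) n
  | 0 => (gF_zero _).symm
  | n + 1 => by
    rw [qFactU, qFact_eq_gF n, gF_succ]; rfl

lemma isUnit_qFact (hU : ∀ n : ℕ, 1 ≤ n → IsUnit (qNumU q n)) :
    ∀ n : ℕ, IsUnit (qFactU q n)
  | 0 => isUnit_one
  | n + 1 => ((isUnit_qFact hU n).mul (hU (n + 1) (by omega)))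

lemma fact_mul_qc (hU : ∀ n : ℕ, 1 ≤ n → IsUnit (qNumU q n)) (n : ℕ) :
    qFactU q n * qc q n = 1 :=
  Ring.mul_inverse_cancel _ (isUnit_qFact q hU n)

lemma KB (hU : ∀ n : ℕ, 1 ≤ n → IsUnit (qNumU q n)) {a j : ℕ} (h : j ≤ a) :
    qFactU q a * (qc q (a - j) * qc q j) = gB ((q⁻¹ : Rˣ) : R) a j := by
  set t := ((q⁻¹ : Rˣ) : R)
  have E := gB_mul_gF t a j h
  rw [← qFact_eq_gF, ← qFact_eq_gF, ← qFact_eq_gF] at E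
  have h1 := fact_mul_qc q hU j
  have h2 := fact_mul_qc q hU (a - j)
  linear_combination (gB t a j * qFactU q j * qc q j) * h2 + gB t a j * h1
    - (qc q (a - j) * qc q j) * E

lemma KD (hU : ∀ n : ℕ, 1 ≤ n → IsUnit (qNumU q n)) (j b : ℕ) :
    qFactU q b * (if j ≤ b then qc q (b - j) else 0) = gD ((q⁻¹ : Rˣ) : R) b j := by
  set t := ((q⁻¹ : Rˣ) : R)
  by_cases h : j ≤ b
  · rw [if_pos h]
    have E := gD_mul_gF t b j h
    rw [← qFact_eq_gF, ← qFact_eq_gF] at E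
    have h2 := fact_mul_qc q hU (b - j)
    linear_combination gD t b j * h2 - qc q (b - j) * E
  · rw [if_neg h, mul_zero, gD_eq_zero t (by omega)]

theorem KEY (hU : ∀ n : ℕ, 1 ≤ n → IsUnit (qNumU q n)) {a N : ℕ} (b : ℕ) (hA : a < N) :
    ∑ j ∈ range N, gw ((q⁻¹ : Rˣ) : R) j * qc q j *
        ((if j ≤ b then qc q (b - j) else 0) * (if j ≤ a then qc q (a - j) else 0))
      = qc q a * qc q b * ((q⁻¹ : Rˣ) : R) ^ (a * b) := by
  set t := ((q⁻¹ : Rˣ) : R) with ht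
  rw [← Finset.sum_subset (Finset.range_subset_range.mpr hA)
      (fun j _ hj => by
        have hja : ¬ j ≤ a := fun hja => hj (Finset.mem_range.mpr (by omega))
        rw [if_neg hja]; ring)]
  apply ((isUnit_qFact q hU a).mul (isUnit_qFact q hU b)).mul_left_cancel
  rw [Finset.mul_sum]
  have hstep : ∀ j ∈ range (a + 1),
      qFactU q a * qFactU q b * (gw t j * qc q j *
        ((if j ≤ b then qc q (b - j) else 0) * (if j ≤ a then qc q (a - j) else 0)))
      = gw t j * gB t a j * gD t b j := by
    intro j hj
    have hja : j ≤ a := by simpa [Nat.lt_succ_iff] using Finset.mem_range.mp hj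
    rw [if_pos hja]
    have hKB := KB q hU hja
    have hKD := KD q hU j b
    linear_combination (gw t j * qFactU q b * (if j ≤ b then qc q (b - j) else 0)) * hKB
      + (gw t j * gB t a j) * hKD
  rw [Finset.sum_congr rfl hstep, gG]
  have h1 := fact_mul_qc q hU a
  have h2 := fact_mul_qc q hU b
  linear_combination (-(t ^ (a * b) * qFactU q b * qc q b)) * h1 - t ^ (a * b) * h2

end Units

section Alg
variable (q : Rˣ) {A : Type*} [Ring A] [Algebra R A]

lemma qE_eq_sum (z : A) {N : ℕ} (hz : ∀ m, N ≤ m → z ^ m = 0) :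
    qE q z = ∑ n ∈ range N, qc q n • z ^ n := by
  rw [qE]
  exact finsum_eq_sum_of_support_subset _
    (Function.support_subset_iff'.mpr fun n hn => by
      rw [hz n (by simpa using hn), smul_zero])

variable {x y : A}

lemma swap_pow_right (hxy : x * y = ((q⁻¹ : Rˣ) : R) • (y * x)) :
    ∀ b : ℕ, x * y ^ b = (((q⁻¹ : Rˣ) : R) ^ b) • (y ^ b * x)
  | 0 => by simp
  | b + 1 => by
    rw [pow_succ, ← mul_assoc, swap_pow_right hxy b, smul_mul_assoc, mul_assoc, hxy,
      mul_smul_comm, smul_smul, ← pow_succ, ← mul_assoc, ← pow_succ]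

lemma swap_pow (hxy : x * y = ((q⁻¹ : Rˣ) : R) • (y * x)) :
    ∀ a b : ℕ, x ^ a * y ^ b = (((q⁻¹ : Rˣ) : R) ^ (a * b)) • (y ^ b * x ^ a)
  | 0, b => by simp
  | a + 1, b => by
    rw [pow_succ', mul_assoc, swap_pow hxy a b, mul_smul_comm, ← mul_assoc,
      swap_pow_right q hxy b, smul_mul_assoc, smul_smul, ← pow_add, mul_assoc, ← pow_succ']
    congr 2
    ring

lemma yx_pow (hxy : x * y = ((q⁻¹ : Rˣ) : R) • (y * x)) :
    ∀ j : ℕ, (y * x) ^ j = (((q⁻¹ : Rˣ) : R) ^ (j.choose 2)) • (y ^ j * x ^ j)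
  | 0 => by simp
  | j + 1 => by
    have h1 : x ^ j * y ^ 1 = (((q⁻¹ : Rˣ) : R) ^ (j * 1)) • (y ^ 1 * x ^ j) :=
      swap_pow q hxy j 1
    rw [pow_one, mul_one] at h1
    have e : j.choose 2 + j = (j + 1).choose 2 := by
      rw [Nat.choose_succ_succ, Nat.choose_one_right]; ring
    have hA : y ^ j * (y * x ^ j) * x = y ^ (j + 1) * x ^ (j + 1) := by
      rw [mul_assoc (y ^ j), mul_assoc y, ← pow_succ, ← mul_assoc, ← pow_succ]
    calc (y * x) ^ (j + 1) = (y * x) ^ j * (y * x) := pow_succ _ _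
      _ = ((((q⁻¹ : Rˣ) : R) ^ (j.choose 2)) • (y ^ j * x ^ j)) * (y * x) := by
          rw [yx_pow hxy j]
      _ = (((q⁻¹ : Rˣ) : R) ^ (j.choose 2)) • (y ^ j * (x ^ j * y) * x) := by
          rw [smul_mul_assoc, mul_assoc (y ^ j), ← mul_assoc (x ^ j), ← mul_assoc (y ^ j)]
      _ = (((q⁻¹ : Rˣ) : R) ^ (j.choose 2)) •
            ((((q⁻¹ : Rˣ) : R) ^ j) • (y ^ j * (y * x ^ j) * x)) := by
          rw [h1, mul_smul_comm, smul_mul_assoc]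
      _ = (((q⁻¹ : Rˣ) : R) ^ ((j + 1).choose 2)) • (y ^ (j + 1) * x ^ (j + 1)) := by
          rw [smul_smul, ← pow_add, e, hA]

end Alg
end QPent

open Finset QPent in
/-- The pentagon identity for the exponentiated q-dilogarithm: for nilpotent `x, y`
with `y x = q • (x y)`, the product `y x` is nilpotent and
`𝓔_q(x) 𝓔_q(y) = 𝓔_q(y) 𝓔_q(-y x) 𝓔_q(x)`. -/
theorem qE_pentagon {R : Type*} [CommRing R] (q : Rˣ)
    (hU : ∀ n : ℕ, 1 ≤ n → IsUnit (qNumU q n))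
    {A : Type*} [Ring A] [Algebra R A]
    (x y : A) (hx : IsNilpotent x) (hy : IsNilpotent y)
    (hcomm : y * x = (q : R) • (x * y)) :
    IsNilpotent (y * x) ∧
      qE q x * qE q y = qE q y * qE q (-(y * x)) * qE q x := by
  classical
  obtain ⟨n1, hx1⟩ := hx
  obtain ⟨n2, hy1⟩ := hy
  set t : R := ((q⁻¹ : Rˣ) : R) with ht
  have htq : t * (q : R) = 1 := by rw [ht, ← Units.val_mul, inv_mul_cancel, Units.val_one]
  have hxy : x * y = t • (y * x) := by
    rw [hcomm, smul_smul, htq, one_smul]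
  set N := n1 + n2 + 1 with hNdef
  have hx0 : ∀ m, N ≤ m → x ^ m = 0 := by
    intro m hm
    have h1 : m = n1 + (m - n1) := by omega
    rw [h1, pow_add, hx1, zero_mul]
  have hy0 : ∀ m, N ≤ m → y ^ m = 0 := by
    intro m hm
    have h1 : m = n2 + (m - n2) := by omega
    rw [h1, pow_add, hy1, zero_mul]
  have hyx : ∀ j : ℕ, (y * x) ^ j = (t ^ (j.choose 2)) • (y ^ j * x ^ j) :=
    yx_pow q hxy
  have hz0 : ∀ m, N ≤ m → (-(y * x)) ^ m = 0 := by
    intro m hm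
    rw [show -(y * x) = (-1 : R) • (y * x) from (neg_one_smul R _).symm, smul_pow,
      hyx m, hy0 m hm, zero_mul, smul_zero, smul_zero]
  refine ⟨⟨N, by rw [hyx N, hy0 N le_rfl, zero_mul, smul_zero]⟩, ?_⟩
  rw [qE_eq_sum q x hx0, qE_eq_sum q y hy0, qE_eq_sum q _ hz0]
  -- abbreviation for shifted coefficients
  set hb : ℕ → ℕ → R := fun j b => if j ≤ b then qc q (b - j) else 0 with hhb
  -- shift lemma
  have hshift : ∀ z : A, (∀ m, N ≤ m → z ^ m = 0) → ∀ j : ℕ, j ≤ N →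
      (∑ i ∈ range N, qc q i • z ^ (j + i)) = ∑ b ∈ range (2 * N), hb j b • z ^ b := by
    intro z hz j hj
    rw [← Finset.sum_subset (Finset.range_subset_range.mpr (by omega : j + N ≤ 2 * N))
        (fun b _ hbn => by
          have hNb : N ≤ b := by
            have h1 : ¬ b < j + N := fun h => hbn (Finset.mem_range.mpr h)
            omega
          rw [hz b hNb, smul_zero])]
    rw [Finset.sum_range_add (fun b => hb j b • z ^ b) j N]
    have h0 : ∑ b ∈ range j, hb j b • z ^ b = 0 := by
      apply Finset.sum_eq_zero
      intro b hbj
      have : ¬ j ≤ b := by simpa using Finset.mem_range.mp hbj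
      rw [hhb]; simp [this]
    rw [h0, zero_add]
    apply Finset.sum_congr rfl
    intro i _
    rw [hhb]
    simp [Nat.le_add_right, Nat.add_sub_cancel_left]
  -- left-hand side
  have hL : (∑ a ∈ range N, qc q a • x ^ a) * (∑ b ∈ range N, qc q b • y ^ b)
      = ∑ b ∈ range N, ∑ a ∈ range N, (qc q a * qc q b * t ^ (a * b)) • (y ^ b * x ^ a) := by
    rw [Finset.sum_mul_sum, Finset.sum_comm]
    apply Finset.sum_congr rfl; intro b _
    apply Finset.sum_congr rfl; intro a _
    rw [smul_mul_smul_comm, swap_pow q hxy a b, smul_smul]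
  -- right-hand side
  have hmid : ∀ j : ℕ, qc q j • (-(y * x)) ^ j = (gw t j * qc q j) • (y ^ j * x ^ j) := by
    intro j
    rw [show -(y * x) = (-1 : R) • (y * x) from (neg_one_smul R _).symm, smul_pow,
      hyx j, smul_smul, smul_smul, gw]
    congr 1
    ring
  have hR : (∑ i ∈ range N, qc q i • y ^ i) * (∑ j ∈ range N, qc q j • (-(y * x)) ^ j)
        * (∑ k ∈ range N, qc q k • x ^ k)
      = ∑ b ∈ range N, ∑ a ∈ range N,
          (∑ j ∈ range N, gw t j * qc q j * (hb j b * hb j a)) • (y ^ b * x ^ a) := by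
    rw [Finset.sum_congr rfl (fun j _ => hmid j)]
    rw [Finset.mul_sum (range N) (fun j => (gw t j * qc q j) • (y ^ j * x ^ j))
        (∑ i ∈ range N, qc q i • y ^ i),
      Finset.sum_mul (range N)
        (fun j => (∑ i ∈ range N, qc q i • y ^ i) * ((gw t j * qc q j) • (y ^ j * x ^ j)))
        (∑ k ∈ range N, qc q k • x ^ k)]
    have hper : ∀ j ∈ range N,
        (∑ i ∈ range N, qc q i • y ^ i) * ((gw t j * qc q j) • (y ^ j * x ^ j))
            * (∑ k ∈ range N, qc q k • x ^ k)
        = ∑ b ∈ range (2 * N), ∑ a ∈ range (2 * N),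
            (gw t j * qc q j * (hb j b * hb j a)) • (y ^ b * x ^ a) := by
      intro j hjN
      have hjN' : j ≤ N := le_of_lt (Finset.mem_range.mp hjN)
      have hy' : (∑ i ∈ range N, qc q i • y ^ i) * y ^ j
          = ∑ b ∈ range (2 * N), hb j b • y ^ b := by
        rw [Finset.sum_mul, ← hshift y hy0 j hjN']
        apply Finset.sum_congr rfl; intro i _
        rw [smul_mul_assoc, ← pow_add, Nat.add_comm i j]
      have hx' : x ^ j * (∑ k ∈ range N, qc q k • x ^ k)
          = ∑ a ∈ range (2 * N), hb j a • x ^ a := by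
        rw [Finset.mul_sum, ← hshift x hx0 j hjN']
        apply Finset.sum_congr rfl; intro k _
        rw [mul_smul_comm, ← pow_add]
      rw [mul_smul_comm, smul_mul_assoc, ← mul_assoc, mul_assoc _ (y ^ j) (x ^ j),
        ← mul_assoc _ (y ^ j), mul_assoc _ (x ^ j), hy', hx', Finset.sum_mul_sum]
      rw [Finset.smul_sum]
      apply Finset.sum_congr rfl; intro b _
      rw [Finset.smul_sum]
      apply Finset.sum_congr rfl; intro a _
      rw [smul_mul_smul_comm, smul_smul]
    rw [Finset.sum_congr rfl hper]
    rw [Finset.sum_comm]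
    have hshrinkb : ∀ b ∈ range (2 * N), b ∉ range N →
        (∑ j ∈ range N, ∑ a ∈ range (2 * N),
          (gw t j * qc q j * (hb j b * hb j a)) • (y ^ b * x ^ a)) = 0 := by
      intro b _ hbn
      have hyb : y ^ b = 0 := hy0 b (by simpa using hbn)
      apply Finset.sum_eq_zero; intro j _
      apply Finset.sum_eq_zero; intro a _
      rw [hyb, zero_mul, smul_zero]
    rw [← Finset.sum_subset (Finset.range_subset_range.mpr (by omega : N ≤ 2 * N)) hshrinkb]
    apply Finset.sum_congr rfl; intro b _
    rw [Finset.sum_comm]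
    have hshrinka : ∀ a ∈ range (2 * N), a ∉ range N →
        (∑ j ∈ range N, (gw t j * qc q j * (hb j b * hb j a)) • (y ^ b * x ^ a)) = 0 := by
      intro a _ han
      have hxa : x ^ a = 0 := hx0 a (by simpa using han)
      apply Finset.sum_eq_zero; intro j _
      rw [hxa, mul_zero, smul_zero]
    rw [← Finset.sum_subset (Finset.range_subset_range.mpr (by omega : N ≤ 2 * N)) hshrinka]
    apply Finset.sum_congr rfl; intro a _
    rw [← Finset.sum_smul]
  rw [hL, hR]
  apply Finset.sum_congr rfl; intro b _
  apply Finset.sum_congr rfl; intro a ha'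
  rw [← KEY q hU b (Finset.mem_range.mp ha')]
end

section
/- Let R be a commutative ring and q ∈ Rˣ a unit such that [n]_q := 1 − q^{−n} is a unit of R for every n ≥ 1, A an associative unital R-algebra, and z ∈ A nilpotent. Then (1 − z) · 𝓔_q(z) = 𝓔_q(q^{−1} • z). -/
/-! Comparing coefficients of `z ^ n`, the functional equation amounts to the recursion
`([n+1]_q!)⁻¹ - ([n]_q!)⁻¹ = q^{-(n+1)} ([n+1]_q!)⁻¹`, which is `[n+1]_q = 1 - q^{-(n+1)}`
multiplied by `([n+1]_q!)⁻¹`. The sums are finite since `z` is nilpotent. -/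

open Finset

theorem finsum_smul_pow_eq_sum_range {R M : Type*} [Zero R] [Semiring M]
    [SMulZeroClass R M] (a : ℕ → R) {z : M} {N : ℕ} (hN : z ^ N = 0) :
    ∑ᶠ n, a n • z ^ n = ∑ n ∈ range N, a n • z ^ n := by
  refine finsum_eq_sum_of_support_subset _ fun n hn => ?_
  by_contra hlt
  rw [coe_range, Set.mem_Iio, not_lt] at hlt
  exact hn (by simp only [pow_eq_zero_of_le hlt hN, smul_zero])

theorem one_sub_mul_sum_range_smul_pow {R A : Type*} [CommRing R] [Ring A] [Algebra R A]
    {a b : ℕ → R} (h₀ : a 0 = b 0) (hsucc : ∀ n, a (n + 1) - a n = b (n + 1)) (z : A)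
    (N : ℕ) :
    (1 - z) * ∑ n ∈ range (N + 1), a n • z ^ n + a N • z ^ (N + 1) =
      ∑ n ∈ range (N + 1), b n • z ^ n := by
  induction N with
  | zero => simp [h₀, ← smul_add]
  | succ N ih =>
    rw [sum_range_succ _ (N + 1), sum_range_succ _ (N + 1), ← ih, ← hsucc, mul_add,
      sub_mul (1 : A) z (a (N + 1) • _), one_mul, mul_smul_comm, ← pow_succ', sub_smul]
    abel

theorem inverse_qFactU_succ_mul_qNumU {R : Type*} [CommRing R] (q : Rˣ) {n : ℕ}
    (hn : IsUnit (qNumU q (n + 1))) :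
    Ring.inverse (qFactU q (n + 1)) * qNumU q (n + 1) = Ring.inverse (qFactU q n) := by
  rw [qFactU, Ring.mul_inverse_rev, mul_right_comm, Ring.inverse_mul_cancel _ hn, one_mul]

theorem inverse_qFactU_succ_sub {R : Type*} [CommRing R] (q : Rˣ) {n : ℕ}
    (hn : IsUnit (qNumU q (n + 1))) :
    Ring.inverse (qFactU q (n + 1)) - Ring.inverse (qFactU q n) =
      ((q⁻¹ : Rˣ) : R) ^ (n + 1) * Ring.inverse (qFactU q (n + 1)) := by
  rw [← inverse_qFactU_succ_mul_qNumU q hn, qNumU]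
  ring

theorem qE_smul {R A : Type*} [CommRing R] [Ring A] [Algebra R A] (q : Rˣ) (c : R) (z : A) :
    qE q (c • z) = ∑ᶠ n : ℕ, (c ^ n * Ring.inverse (qFactU q n)) • z ^ n := by
  simp only [qE, smul_pow, smul_smul, mul_comm]

/-- The functional equation of the q-exponential, for nilpotent algebra elements:
`(1 - z) · 𝓔_q(z) = 𝓔_q(q⁻¹ • z)`. -/
theorem one_sub_mul_qE {R : Type*} [CommRing R] (q : Rˣ)
    (hU : ∀ n : ℕ, 1 ≤ n → IsUnit (qNumU q n))
    {A : Type*} [Ring A] [Algebra R A] (z : A) (hz : IsNilpotent z) :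
    (1 - z) * qE q z = qE q (((q⁻¹ : Rˣ) : R) • z) := by
  obtain ⟨N, hN⟩ := hz
  have hN' : z ^ (N + 1) = 0 := pow_eq_zero_of_le N.le_succ hN
  have htelescope := one_sub_mul_sum_range_smul_pow
    (a := fun n => Ring.inverse (qFactU q n))
    (b := fun n => ((q⁻¹ : Rˣ) : R) ^ n * Ring.inverse (qFactU q n))
    (by simp [qFactU]) (fun n => inverse_qFactU_succ_sub q (hU (n + 1) n.succ_pos)) z N
  rw [hN', smul_zero, add_zero] at htelescope
  rw [qE_smul, qE, finsum_smul_pow_eq_sum_range _ hN', finsum_smul_pow_eq_sum_range _ hN',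
    htelescope]
end

section
/- Let R be a commutative ring and q ∈ Rˣ a unit such that [n]_q := 1 − q^{−n} is a unit of R for every n ≥ 1, A an associative unital R-algebra, x ∈ A nilpotent, and y ∈ A with y·x = q • (x·y). Then 𝓔_q(x) and 1 − q•x are units of A, and conjugation by the q-dilogarithm acts on y as the elementary q-cluster transformation: 𝓔_q(x)^{−1} · y · 𝓔_q(x) = (1 − q•x)^{−1} · y. Equivalently, y · 𝓔_q(x) = (1 − q•x)^{−1} · 𝓔_q(x) · y. -/
/-!
The q-commutation `y x = q x y` gives `y 𝓔_q(x) = 𝓔_q(q x) y`, so the theorem reduces to the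
functional equation `(1 - q x) 𝓔_q(q x) = 𝓔_q(x)`. Writing `cₙ = ([n]_q!)⁻¹`, this is the
coefficient identity `qⁿ⁺¹ cₙ₊₁ = q (qⁿ cₙ) + cₙ₊₁`, which is `cₙ = [n+1]_q cₙ₊₁`
multiplied by `qⁿ⁺¹`.
-/

open Finset

section QDilogarithm

variable {R : Type*} [CommRing R] (q : Rˣ) {A : Type*} [Ring A] [Algebra R A]

theorem inverse_qFactU_eq_qNumU_mul (hU : ∀ n : ℕ, 1 ≤ n → IsUnit (qNumU q n)) (n : ℕ) :
    Ring.inverse (qFactU q n) = qNumU q (n + 1) * Ring.inverse (qFactU q (n + 1)) := by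
  rw [qFactU, Ring.mul_inverse_rev, ← mul_assoc,
    Ring.mul_inverse_cancel _ (hU (n + 1) n.succ_pos), one_mul]

theorem pow_succ_mul_inverse_qFactU (hU : ∀ n : ℕ, 1 ≤ n → IsUnit (qNumU q n)) (n : ℕ) :
    (q : R) ^ (n + 1) * Ring.inverse (qFactU q (n + 1)) =
      q * ((q : R) ^ n * Ring.inverse (qFactU q n)) + Ring.inverse (qFactU q (n + 1)) := by
  have hq : (q : R) ^ (n + 1) * ((q⁻¹ : Rˣ) : R) ^ (n + 1) = 1 := by
    rw [← mul_pow, Units.mul_inv, one_pow]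
  rw [inverse_qFactU_eq_qNumU_mul q hU n, qNumU]
  linear_combination Ring.inverse (qFactU q (n + 1)) * hq

theorem qE_eq_sum_range {z : A} {N : ℕ} (hz : z ^ N = 0) :
    qE q z = ∑ n ∈ range N, Ring.inverse (qFactU q n) • z ^ n := by
  refine finsum_eq_sum_of_support_subset _ fun n hn => ?_
  by_contra hnN
  simp only [coe_range, Set.mem_Iio, not_lt] at hnN
  exact hn (by simp only [pow_eq_zero_of_le hnN hz, smul_zero])

theorem commute_qE {a z : A} (h : Commute a z) (hz : IsNilpotent z) : Commute a (qE q z) := by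
  obtain ⟨N, hN⟩ := hz
  rw [qE_eq_sum_range q hN]
  exact Commute.sum_right _ _ _ fun n _ => (h.pow_right n).smul_right _

theorem isUnit_qE {z : A} (hz : IsNilpotent z) : IsUnit (qE q z) := by
  obtain ⟨N, hN⟩ := hz
  have hN' : z ^ (N + 1) = 0 := by rw [pow_succ, hN, zero_mul]
  rw [qE_eq_sum_range q hN', sum_range_succ', pow_zero, qFactU, Ring.inverse_one, one_smul,
    add_comm]
  have hzn : ∀ n, Commute z (z ^ n) := (Commute.refl z).pow_right
  refine IsNilpotent.isUnit_one_add (Commute.isNilpotent_sum (fun n _ => ?_) fun m n _ _ => ?_)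
  · rw [pow_succ]
    exact ((hzn n).symm.isNilpotent_mul_left ⟨N, hN⟩).smul _
  · exact (((Commute.refl z).pow_pow _ _).smul_left _).smul_right _

theorem mul_pow_of_mul_eq_smul_mul {r : R} {x y : A} (h : y * x = r • (x * y)) (n : ℕ) :
    y * x ^ n = r ^ n • (x ^ n * y) := by
  induction n with
  | zero => simp
  | succ n ih =>
    calc y * x ^ (n + 1) = r ^ n • (x ^ n * (y * x)) := by
          rw [pow_succ, ← mul_assoc, ih, smul_mul_assoc, mul_assoc]
      _ = r ^ (n + 1) • (x ^ (n + 1) * y) := by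
          rw [h, mul_smul_comm, smul_smul, ← pow_succ, ← mul_assoc, ← pow_succ]

theorem mul_qE_of_mul_eq_smul_mul {r : R} {x y : A} (hx : IsNilpotent x)
    (h : y * x = r • (x * y)) : y * qE q x = qE q (r • x) * y := by
  obtain ⟨N, hN⟩ := hx
  have hrN : (r • x) ^ N = 0 := by rw [smul_pow, hN, smul_zero]
  rw [qE_eq_sum_range q hN, qE_eq_sum_range q hrN, mul_sum, sum_mul]
  refine sum_congr rfl fun n _ => ?_
  rw [mul_smul_comm, mul_pow_of_mul_eq_smul_mul h, smul_pow, smul_mul_assoc, smul_mul_assoc]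

theorem one_sub_smul_mul_sum_range {r : R} {a b : ℕ → R} (h0 : a 0 = b 0)
    (hsucc : ∀ n, a (n + 1) = r * a n + b (n + 1)) (x : A) (N : ℕ) :
    (1 - r • x) * ∑ n ∈ range (N + 1), a n • x ^ n =
      ∑ n ∈ range (N + 1), b n • x ^ n - (r * a N) • x ^ (N + 1) := by
  have hterm (c : R) (m : ℕ) :
      (1 - r • x) * (c • x ^ m) = c • x ^ m - (r * c) • x ^ (m + 1) := by
    rw [sub_mul, one_mul, smul_mul_smul_comm, ← pow_succ', mul_comm]
  induction N with
  | zero => rw [sum_range_one, sum_range_one, hterm, h0]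
  | succ N ih =>
    rw [sum_range_succ, mul_add, ih, hterm, sum_range_succ _ (N + 1), hsucc]
    module

theorem one_sub_smul_mul_qE_smul (hU : ∀ n : ℕ, 1 ≤ n → IsUnit (qNumU q n)) {x : A}
    (hx : IsNilpotent x) : (1 - (q : R) • x) * qE q ((q : R) • x) = qE q x := by
  obtain ⟨N, hN⟩ := hx
  have hN' : x ^ (N + 1) = 0 := by rw [pow_succ, hN, zero_mul]
  have hqN' : ((q : R) • x) ^ (N + 1) = 0 := by rw [smul_pow, hN', smul_zero]
  rw [qE_eq_sum_range q hqN', qE_eq_sum_range q hN']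
  simp_rw [smul_pow, smul_smul, mul_comm _ ((q : R) ^ _)]
  rw [one_sub_smul_mul_sum_range (b := fun n => Ring.inverse (qFactU q n))
    (by rw [pow_zero, one_mul]) (pow_succ_mul_inverse_qFactU q hU), hN', smul_zero, sub_zero]

end QDilogarithm

/-- Conjugation by the q-dilogarithm is the elementary q-cluster transformation:
for `x` nilpotent and `y x = q • (x y)`, both `𝓔_q(x)` and `1 - q • x` are units, and
`𝓔_q(x)⁻¹ · y · 𝓔_q(x) = (1 - q • x)⁻¹ · y`; equivalently
`y · 𝓔_q(x) = (1 - q • x)⁻¹ · 𝓔_q(x) · y`. -/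
theorem qE_conjugation {R : Type*} [CommRing R] (q : Rˣ)
    (hU : ∀ n : ℕ, 1 ≤ n → IsUnit (qNumU q n))
    {A : Type*} [Ring A] [Algebra R A]
    (x : A) (hx : IsNilpotent x) (y : A) (hcomm : y * x = (q : R) • (x * y)) :
    IsUnit (qE q x) ∧ IsUnit (1 - (q : R) • x) ∧
      Ring.inverse (qE q x) * y * qE q x = Ring.inverse (1 - (q : R) • x) * y ∧
      y * qE q x = Ring.inverse (1 - (q : R) • x) * (qE q x * y) := by
  set u := 1 - (q : R) • x
  have hE : IsUnit (qE q x) := isUnit_qE q hx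
  have hu : IsUnit u := (hx.smul _).isUnit_one_sub
  have hy : y * qE q x = qE q ((q : R) • x) * y := mul_qE_of_mul_eq_smul_mul q hx hcomm
  have hfun : u * qE q ((q : R) • x) = qE q x := one_sub_smul_mul_qE_smul q hU hx
  have hcomm_u : Commute u (qE q ((q : R) • x)) :=
    commute_qE q ((Commute.one_left _).sub_left (Commute.refl _)) (hx.smul _)
  have hleft : qE q ((q : R) • x) = Ring.inverse u * qE q x := by
    rw [← hfun, Ring.inverse_mul_cancel_left _ _ hu]
  have hright : qE q ((q : R) • x) = qE q x * Ring.inverse u := by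
    rw [← hfun, hcomm_u.eq, Ring.mul_inverse_cancel_right _ _ hu]
  refine ⟨hE, hu, ?_, ?_⟩
  · rw [mul_assoc, hy, hright, mul_assoc, Ring.inverse_mul_cancel_left _ _ hE]
  · rw [hy, hleft, mul_assoc]
end
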